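/- arXiv:1302.4129 — 2 statements merged into one kernel-verified Lean document; each statement's English description precedes it below -/
import Mathlib

section
/- (MDS property) Let k ≥ 3 be odd. Index the k+2 columns of a codeword as follows: for j ∈ {0,…,k−1}, column j is the vector (a_{i,j})_{i ∈ {0,…,2^{k−1}−1}}; column k is the horizontal parity vector (h_i(a))_i; column k+1 is the butterfly parity vector (b_i(a))_i. Then for any two distinct column indices c_1, c_2 ∈ {0,…,k+1}, if two information arrays a, a′ : {0,…,2^{k−1}−1} × {0,…,k−1} → GF(2) produce codewords that agree on every column other than c_1 and c_2, then a = a′. In other words, the code tolerates the erasure of any two of its k+2 columns. -/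
/-!
With `d = a - a'`, a single erased information column is recovered from the horizontal parities.
In the other cases (the horizontal parity and one information column `e` erased, or two
information columns `e₁, e₂` erased, whose entries then agree in every row by the horizontal
parity) every row `v` of `d` is `c v` times the indicator of `S = {e}` or `S = {e₁, e₂}`. As `k`
is odd, of two columns exactly one lies in the cyclic window `W` of the other, so we may take
`e₁ ∈ W(e₂)` and `e₂ ∉ W(e₁)`: then `#(W(e₁) ∩ S)` is odd and `#(W(e₂) ∩ S)` is even. Hence in
the butterfly line through `u ⊕ (2^{e₁} - 1)` the row `u` occurs with coefficient `1`, and every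
other row `v` occurring with nonzero coefficient differs from `u` in darkness only at `e₁` and at
one column `j` where the coefficient of `v` is nonzero and that of `u` is zero. Induction on the
number of zero coefficients of a row gives `c = 0`.
-/

/-- The `j`-th bit of `i` (`j ≥ 0`). -/
def bitp (i j : ℕ) : Bool := i.testBit j

/-- The `(j-1)`-th bit of `i`, with the convention that the bit at position `-1` is `0`. -/
def bitm (i j : ℕ) : Bool := if j = 0 then false else i.testBit (j - 1)

/-- `i` is dark in column `j` iff `i(j) = i(j-1)`. -/
def dark (i j : ℕ) : Prop := bitp i j = bitm i j

instance (i j : ℕ) : Decidable (dark i j) := by unfold dark; infer_instance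

/-- `ℓ_{i,j} = i ⊕ (2^j - 1)`. -/
def ell (i j : ℕ) : ℕ := i ^^^ (2 ^ j - 1)

/-- The set `B_{i,j}`. -/
def Bset (k i j : ℕ) : Finset (ℕ × ℕ) :=
  if dark i j then
    ((Finset.range k).filter
        (fun j' : ℕ => ((j : ℤ) - (j' : ℤ)) % (k : ℤ) ≤ ((k / 2 : ℕ) : ℤ))).image
      (fun j' => (i, j'))
  else {(i, j)}

/-- The butterfly support set `B_i = ⋃_{j ∈ [k]} B_{ℓ_{i,j}, j}`. -/
def Bline (k i : ℕ) : Finset (ℕ × ℕ) :=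
  (Finset.range k).biUnion (fun j => Bset k (ell i j) j)

/-- Horizontal parity `h_i(a)`. -/
def hpar (k : ℕ) (a : ℕ → ℕ → ZMod 2) (i : ℕ) : ZMod 2 :=
  ∑ j ∈ Finset.range k, a i j

/-- Butterfly parity `b_i(a)`. -/
def bpar (k : ℕ) (a : ℕ → ℕ → ZMod 2) (i : ℕ) : ZMod 2 :=
  ∑ p ∈ Bline k i, a p.1 p.2

/-- The `c`-th column of the codeword: columns `0,…,k-1` are information columns,
column `k` is the horizontal parity node and column `k+1` is the butterfly parity node. -/
def column (k : ℕ) (a : ℕ → ℕ → ZMod 2) (c : ℕ) : ℕ → ZMod 2 :=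
  if c < k then fun i => a i c
  else if c = k then hpar k a
  else bpar k a

open Finset

def window (k j : ℕ) : Finset ℕ :=
  (range k).filter (fun j' : ℕ => ((j : ℤ) - (j' : ℤ)) % (k : ℤ) ≤ ((k / 2 : ℕ) : ℤ))

lemma Bset_of_dark {k i j : ℕ} (h : dark i j) :
    Bset k i j = (window k j).image (fun j' => (i, j')) := by
  rw [Bset, if_pos h]; rfl

lemma Bset_of_not_dark {k i j : ℕ} (h : ¬ dark i j) : Bset k i j = {(i, j)} := by
  rw [Bset, if_neg h]

lemma fst_of_mem_Bset {k i j : ℕ} {p : ℕ × ℕ} (hp : p ∈ Bset k i j) : p.1 = i := by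
  by_cases h : dark i j
  · obtain ⟨j', -, rfl⟩ := mem_image.mp (Bset_of_dark h ▸ hp); rfl
  · rw [Bset_of_not_dark h, mem_singleton] at hp; rw [hp]

lemma mem_window_self {k j : ℕ} (hj : j < k) : j ∈ window k j := by
  simp [window, hj]
  omega

lemma mem_window_iff_not_mem_window {k j j' : ℕ} (hodd : Odd k) (hj : j < k) (hj' : j' < k)
    (hne : j ≠ j') : j' ∈ window k j ↔ j ∉ window k j' := by
  obtain ⟨m, rfl⟩ := hodd
  have hm : (2 * m + 1) / 2 = m := by omega
  simp only [window, mem_filter, mem_range, hj, hj', true_and, hm, not_le]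
  push_cast
  have hwrap : ∀ x : ℤ, 0 < x → x < 2 * m + 1 →
      x % (2 * m + 1) = x ∧ (-x) % (2 * m + 1) = 2 * m + 1 - x := by
    intro x h0 h1
    refine ⟨Int.emod_eq_of_lt h0.le h1, ?_⟩
    rw [show -x = (2 * m + 1 - x) + (2 * m + 1) * (-1) by ring, Int.add_mul_emod_self_left]
    exact Int.emod_eq_of_lt (by omega) (by omega)
  rcases Nat.lt_or_gt_of_ne hne with h | h
  · obtain ⟨e1, e2⟩ := hwrap ((j' : ℤ) - j) (by omega) (by omega)
    rw [neg_sub] at e2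
    rw [e1, e2]; omega
  · obtain ⟨e1, e2⟩ := hwrap ((j : ℤ) - j') (by omega) (by omega)
    rw [neg_sub] at e2
    rw [e1, e2]; omega

lemma ell_ell_self (i j : ℕ) : ell (ell i j) j = i :=
  Nat.xor_xor_cancel_right _ _

lemma ell_lt_two_pow {n i j : ℕ} (hi : i < 2 ^ n) (hj : j ≤ n) : ell i j < 2 ^ n :=
  Nat.xor_lt_two_pow hi (by have := Nat.pow_le_pow_right two_pos hj; omega)

lemma ell_right_injective (i : ℕ) : Function.Injective (ell i) := by
  intro j j' h
  have h' : 2 ^ j - 1 = 2 ^ j' - 1 := Nat.xor_right_injective h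
  have := j.one_le_two_pow
  have := j'.one_le_two_pow
  exact Nat.pow_right_injective le_rfl (show 2 ^ j = 2 ^ j' by omega)

/-- A single mask `2 ^ a - 1` with `a ≠ 0` changes the darkness at positions `0` and `a`. -/
lemma dark_ell_ell {a b : ℕ} (hab : a ≠ b) (u t : ℕ) :
    dark (ell (ell u a) b) t ↔ (dark u t ↔ t ≠ a ∧ t ≠ b) := by
  simp only [dark, bitp, bitm, ell, Nat.testBit_xor, Nat.testBit_two_pow_sub_one]
  rcases t with _ | s
  · rcases Nat.eq_zero_or_pos a with rfl | ha <;> rcases Nat.eq_zero_or_pos b with rfl | hb <;>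
      cases u.testBit 0 <;> simp_all [eq_comm, Nat.pos_iff_ne_zero]
  · simp only [Nat.add_one_ne_zero, if_false, Nat.add_sub_cancel]
    have hstep : ∀ c, decide (s < c) = (decide (s + 1 < c) ^^ decide (s + 1 = c)) := by
      intro c
      by_cases h1 : s < c <;> by_cases h2 : s + 1 < c <;> by_cases h3 : s + 1 = c <;>
        simp [h1, h2, h3] <;> omega
    rw [hstep a, hstep b]
    by_cases ha : s + 1 = a <;> by_cases hb : s + 1 = b <;> simp [ha, hb] <;> grind

lemma bpar_eq_sum_sum_Bset (k : ℕ) (d : ℕ → ℕ → ZMod 2) (i : ℕ) :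
    bpar k d i = ∑ j ∈ range k, ∑ p ∈ Bset k (ell i j) j, d p.1 p.2 := by
  refine sum_biUnion fun j _ j' _ hjj' => disjoint_left.mpr fun p hp hp' => hjj' ?_
  exact ell_right_injective i ((fst_of_mem_Bset hp).symm.trans (fst_of_mem_Bset hp'))

/-- The parity of `#(B_{v,j} ∩ ({v} × S))`. -/
def blockParity (k : ℕ) (S : Finset ℕ) (v j : ℕ) : ZMod 2 :=
  if dark v j then (#(window k j ∩ S) : ZMod 2) else if j ∈ S then 1 else 0

lemma sum_Bset_eq_mul_blockParity {k : ℕ} {S : Finset ℕ} {d : ℕ → ℕ → ZMod 2} {c : ℕ → ZMod 2}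
    {v j : ℕ} (hv : ∀ j' < k, d v j' = if j' ∈ S then c v else 0) (hj : j < k) :
    ∑ p ∈ Bset k v j, d p.1 p.2 = c v * blockParity k S v j := by
  by_cases h : dark v j
  · have hrow : ∀ j' ∈ window k j, d v j' = if j' ∈ S then c v else 0 :=
      fun j' hj' => hv j' (mem_range.mp (mem_filter.mp hj').1)
    rw [Bset_of_dark h, sum_image fun _ _ _ _ h => (Prod.mk.inj h).2, sum_congr rfl hrow,
      sum_ite_mem, sum_const, nsmul_eq_mul, mul_comm, blockParity, if_pos h]
  · rw [Bset_of_not_dark h, sum_singleton, hv j hj, blockParity, if_neg h]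
    split_ifs <;> simp

lemma bpar_eq_sum_mul_blockParity {k : ℕ} {S : Finset ℕ} {d : ℕ → ℕ → ZMod 2} {c : ℕ → ZMod 2}
    (hd : ∀ v < 2 ^ (k - 1), ∀ j' < k, d v j' = if j' ∈ S then c v else 0)
    {i : ℕ} (hi : i < 2 ^ (k - 1)) :
    bpar k d i = ∑ j ∈ range k, c (ell i j) * blockParity k S (ell i j) j := by
  rw [bpar_eq_sum_sum_Bset]
  refine sum_congr rfl fun j hj => ?_
  have hjk := mem_range.mp hj
  exact sum_Bset_eq_mul_blockParity (hd _ (ell_lt_two_pow hi (by omega))) hjk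

lemma blockParity_congr {k : ℕ} {S : Finset ℕ} {u v t : ℕ} (h : dark v t ↔ dark u t) :
    blockParity k S v t = blockParity k S u t := by
  simp only [blockParity, h]

section Peeling

variable {k : ℕ} {S : Finset ℕ} {j₁ : ℕ}

lemma blockParity_eq_one (hj₁ : j₁ ∈ S) (hσ₁ : (#(window k j₁ ∩ S) : ZMod 2) = 1) (u : ℕ) :
    blockParity k S u j₁ = 1 := by
  unfold blockParity
  split_ifs <;> trivial

lemma blockParity_eq_zero_of_dark_iff_not_dark
    (hσ : ∀ t ∈ S, t ≠ j₁ → (#(window k t ∩ S) : ZMod 2) = 0)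
    {u v j : ℕ} (hj : j ≠ j₁) (hflip : dark v j ↔ ¬ dark u j) (hv : blockParity k S v j ≠ 0) :
    blockParity k S u j = 0 := by
  unfold blockParity at hv ⊢
  by_cases hjS : j ∈ S <;> by_cases hu : dark u j <;> simp_all

def deficit (k : ℕ) (S : Finset ℕ) (j₁ u : ℕ) : ℕ :=
  #(((range k).erase j₁).filter fun t => blockParity k S u t = 0)

lemma deficit_ell_ell_lt (hσ : ∀ t ∈ S, t ≠ j₁ → (#(window k t ∩ S) : ZMod 2) = 0)
    {u j : ℕ} (hj : j < k) (hjj₁ : j ≠ j₁) (hv : blockParity k S (ell (ell u j₁) j) j ≠ 0) :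
    deficit k S j₁ (ell (ell u j₁) j) < deficit k S j₁ u := by
  have hflip := dark_ell_ell hjj₁.symm u
  have hu : blockParity k S u j = 0 :=
    blockParity_eq_zero_of_dark_iff_not_dark hσ hjj₁ (by simp [hflip, hjj₁]) hv
  refine card_lt_card ⟨fun t ht => ?_, fun hsub => hv ?_⟩
  · simp only [mem_filter, mem_erase] at ht ⊢
    obtain ⟨⟨htj₁, htk⟩, ht0⟩ := ht
    refine ⟨⟨htj₁, htk⟩, ?_⟩
    have htj : t ≠ j := fun h => hv (h ▸ ht0)
    have hsame : dark (ell (ell u j₁) j) t ↔ dark u t := by simp [hflip, htj₁, htj]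
    rwa [blockParity_congr hsame] at ht0
  · have := hsub (mem_filter.mpr ⟨mem_erase.mpr ⟨hjj₁, mem_range.mpr hj⟩, hu⟩)
    exact (mem_filter.mp this).2

theorem eq_zero_of_bpar_eq_zero (hj₁k : j₁ < k) (hj₁ : j₁ ∈ S)
    (hσ₁ : (#(window k j₁ ∩ S) : ZMod 2) = 1)
    (hσ : ∀ t ∈ S, t ≠ j₁ → (#(window k t ∩ S) : ZMod 2) = 0)
    {d : ℕ → ℕ → ZMod 2} {c : ℕ → ZMod 2}
    (hd : ∀ v < 2 ^ (k - 1), ∀ j' < k, d v j' = if j' ∈ S then c v else 0)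
    (hb : ∀ i < 2 ^ (k - 1), bpar k d i = 0) :
    ∀ u < 2 ^ (k - 1), c u = 0 := by
  intro u hu
  induction hm : deficit k S j₁ u using Nat.strong_induction_on generalizing u with
  | _ m IH =>
  have hline := hb _ (ell_lt_two_pow hu (j := j₁) (by omega))
  rw [bpar_eq_sum_mul_blockParity hd (ell_lt_two_pow hu (by omega)),
    ← add_sum_erase _ _ (mem_range.mpr hj₁k), ell_ell_self, blockParity_eq_one hj₁ hσ₁,
    mul_one] at hline
  have hrest : ∑ j ∈ (range k).erase j₁,
      c (ell (ell u j₁) j) * blockParity k S (ell (ell u j₁) j) j = 0 := by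
    refine sum_eq_zero fun j hj => ?_
    obtain ⟨hjj₁, hjk⟩ := mem_erase.mp hj
    have hjk := mem_range.mp hjk
    by_cases h0 : blockParity k S (ell (ell u j₁) j) j = 0
    · rw [h0, mul_zero]
    · have hlt := hm ▸ deficit_ell_ell_lt hσ hjk hjj₁ h0
      rw [IH _ hlt _ (ell_lt_two_pow (ell_lt_two_pow hu (by omega)) (by omega)) rfl, zero_mul]
  rwa [hrest, add_zero] at hline

end Peeling

section Decoding

variable {k : ℕ} {d : ℕ → ℕ → ZMod 2}

lemma eq_zero_of_hpar_eq_zero_of_single {N e : ℕ}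
    (hsupp : ∀ i < N, ∀ j < k, j ≠ e → d i j = 0) (hh : ∀ i < N, hpar k d i = 0) :
    ∀ i < N, ∀ j < k, d i j = 0 := by
  intro i hi j hj
  by_cases hje : j = e
  · subst hje
    rw [← hh i hi, hpar,
      sum_eq_single_of_mem j (mem_range.mpr hj) fun t ht htj => hsupp i hi t (mem_range.mp ht) htj]
  · exact hsupp i hi j hj hje

lemma eq_zero_of_bpar_eq_zero_of_single {e : ℕ} (he : e < k)
    (hsupp : ∀ i < 2 ^ (k - 1), ∀ j < k, j ≠ e → d i j = 0)
    (hb : ∀ i < 2 ^ (k - 1), bpar k d i = 0) :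
    ∀ i < 2 ^ (k - 1), ∀ j < k, d i j = 0 := by
  have hσ₁ : (#(window k e ∩ {e}) : ZMod 2) = 1 := by
    rw [inter_singleton_of_mem (mem_window_self he), card_singleton, Nat.cast_one]
  have hd : ∀ v < 2 ^ (k - 1), ∀ j' < k,
      d v j' = if j' ∈ ({e} : Finset ℕ) then d v e else 0 := by
    intro v hv j' hj'
    by_cases h : j' = e
    · simp [h]
    · simp [h, hsupp v hv j' hj' h]
  have he0 := eq_zero_of_bpar_eq_zero he (mem_singleton_self e) hσ₁ (by simp) hd hb
  intro i hi j hj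
  by_cases hje : j = e
  · exact hje ▸ he0 i hi
  · exact hsupp i hi j hj hje

lemma eq_zero_of_hpar_bpar_eq_zero_of_pair (hodd : Odd k) {e₁ e₂ : ℕ} (he₁ : e₁ < k)
    (he₂ : e₂ < k) (hne : e₁ ≠ e₂)
    (hsupp : ∀ i < 2 ^ (k - 1), ∀ j < k, j ≠ e₁ → j ≠ e₂ → d i j = 0)
    (hh : ∀ i < 2 ^ (k - 1), hpar k d i = 0) (hb : ∀ i < 2 ^ (k - 1), bpar k d i = 0) :
    ∀ i < 2 ^ (k - 1), ∀ j < k, d i j = 0 := by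
  wlog hw : e₁ ∈ window k e₂ generalizing e₁ e₂
  · refine this he₂ he₁ hne.symm (fun i hi j hj h₂ h₁ => hsupp i hi j hj h₁ h₂) ?_
    exact not_not.mp ((mem_window_iff_not_mem_window hodd he₂ he₁ hne.symm).not.mp hw)
  have hw' : e₂ ∉ window k e₁ := (mem_window_iff_not_mem_window hodd he₂ he₁ hne.symm).mp hw
  have hσ₁ : (#(window k e₁ ∩ {e₁, e₂}) : ZMod 2) = 1 := by
    rw [show window k e₁ ∩ {e₁, e₂} = {e₁} by
      ext t; simp only [mem_inter, mem_insert, mem_singleton]; grind [mem_window_self]]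
    simp
  have hσ₂ : (#(window k e₂ ∩ {e₁, e₂}) : ZMod 2) = 0 := by
    rw [inter_eq_right.mpr (insert_subset hw (singleton_subset_iff.mpr (mem_window_self he₂))),
      card_pair hne]
    rfl
  have hrow : ∀ v < 2 ^ (k - 1), d v e₂ = d v e₁ := by
    intro v hv
    have h := hh v hv
    rw [hpar, sum_eq_add_of_mem e₁ e₂ (mem_range.mpr he₁) (mem_range.mpr he₂) hne
      fun t ht ⟨h₁, h₂⟩ => hsupp v hv t (mem_range.mp ht) h₁ h₂] at h
    exact (CharTwo.add_eq_zero.mp h).symm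
  have hd : ∀ v < 2 ^ (k - 1), ∀ j' < k,
      d v j' = if j' ∈ ({e₁, e₂} : Finset ℕ) then d v e₁ else 0 := by
    intro v hv j' hj'
    by_cases h₁ : j' = e₁
    · simp [h₁]
    by_cases h₂ : j' = e₂
    · simp [h₂, hrow v hv]
    · simp [h₁, h₂, hsupp v hv j' hj' h₁ h₂]
  have he0 := eq_zero_of_bpar_eq_zero he₁ (mem_insert_self e₁ {e₂}) hσ₁
    (fun t ht hte => by
      simp only [mem_insert, mem_singleton, hte, false_or] at ht; rwa [ht]) hd hb
  intro i hi j hj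
  by_cases h₁ : j = e₁
  · exact h₁ ▸ he0 i hi
  by_cases h₂ : j = e₂
  · rw [h₂, hrow i hi]; exact he0 i hi
  · exact hsupp i hi j hj h₁ h₂

end Decoding

lemma column_sub (k : ℕ) (a a' : ℕ → ℕ → ZMod 2) (c : ℕ) :
    column k (a - a') c = column k a c - column k a' c := by
  unfold column
  split_ifs <;> ext i <;> simp [hpar, bpar, sum_sub_distrib]

lemma eq_zero_of_column_eq_zero {k : ℕ} (hodd : Odd k) {c₁ c₂ : ℕ} (hne : c₁ ≠ c₂)
    {d : ℕ → ℕ → ZMod 2}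
    (hcol : ∀ c < k + 2, c ≠ c₁ → c ≠ c₂ → ∀ i < 2 ^ (k - 1), column k d c i = 0) :
    ∀ i < 2 ^ (k - 1), ∀ j < k, d i j = 0 := by
  wlog h₁₂ : c₁ < c₂ generalizing c₁ c₂
  · exact this hne.symm (fun c hc h₂ h₁ => hcol c hc h₁ h₂) (by omega)
  have hinfo : ∀ i < 2 ^ (k - 1), ∀ j < k, j ≠ c₁ → j ≠ c₂ → d i j = 0 := by
    intro i hi j hj h₁ h₂
    simpa [column, hj] using hcol j (by omega) h₁ h₂ i hi
  have hh : k ≠ c₁ → k ≠ c₂ → ∀ i < 2 ^ (k - 1), hpar k d i = 0 := fun h₁ h₂ i hi => by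
    simpa [column] using hcol k (by omega) h₁ h₂ i hi
  have hb : k + 1 ≠ c₁ → k + 1 ≠ c₂ → ∀ i < 2 ^ (k - 1), bpar k d i = 0 := fun h₁ h₂ i hi => by
    simpa [column] using hcol (k + 1) (by omega) h₁ h₂ i hi
  by_cases hc₂ : c₂ < k
  · exact eq_zero_of_hpar_bpar_eq_zero_of_pair hodd (by omega) hc₂ hne hinfo
      (hh (by omega) (by omega)) (hb (by omega) (by omega))
  by_cases hc₁ : c₁ < k
  · have hsupp : ∀ i < 2 ^ (k - 1), ∀ j < k, j ≠ c₁ → d i j = 0 :=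
      fun i hi j hj h₁ => hinfo i hi j hj h₁ (by omega)
    by_cases hc₂k : c₂ = k
    · exact eq_zero_of_bpar_eq_zero_of_single hc₁ hsupp (hb (by omega) (by omega))
    · exact eq_zero_of_hpar_eq_zero_of_single hsupp (hh (by omega) (Ne.symm hc₂k))
  · exact fun i hi j hj => hinfo i hi j hj (by omega) (by omega)

theorem mds_property_general
    (k : ℕ) (hodd : Odd k)
    (c₁ c₂ : ℕ) (hne : c₁ ≠ c₂)
    (a a' : ℕ → ℕ → ZMod 2)
    (hagree : ∀ c < k + 2, c ≠ c₁ → c ≠ c₂ →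
      ∀ i < 2 ^ (k - 1), column k a c i = column k a' c i) :
    ∀ i < 2 ^ (k - 1), ∀ j < k, a i j = a' i j := by
  have hdiff := eq_zero_of_column_eq_zero hodd hne (d := a - a') fun c hc h₁ h₂ i hi => by
    rw [column_sub, Pi.sub_apply, hagree c hc h₁ h₂ i hi, sub_self]
  exact fun i hi j hj => sub_eq_zero.mp (hdiff i hi j hj)

/-- MDS property: the code tolerates the erasure of any two of its `k+2` columns. -/
theorem mds_property
    (k : ℕ) (hk : 3 ≤ k) (hodd : Odd k)
    (c₁ c₂ : ℕ) (hc₁ : c₁ < k + 2) (hc₂ : c₂ < k + 2) (hne : c₁ ≠ c₂)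
    (a a' : ℕ → ℕ → ZMod 2)
    (hagree : ∀ c < k + 2, c ≠ c₁ → c ≠ c₂ →
      ∀ i < 2 ^ (k - 1), column k a c i = column k a' c i) :
    ∀ i < 2 ^ (k - 1), ∀ j < k, a i j = a' i j :=
  mds_property_general k hodd c₁ c₂ hne a a' hagree
end

section
/- (Characterization of butterfly support) Let k ≥ 3 be odd, i, m ∈ {0,…,2^{k−1}−1} and j ∈ {0,…,k−1}. Then (i,j) ∈ B_m if and only if there exists j′ ∈ {0,…,k−1} such that m = i ⊕ (2^{j′} − 1) and either j′ = j, or both i(j′) = i(j′−1) and (j′ − j) mod k ≤ ⌊k/2⌋. -/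
lemma ell_ell (m j : ℕ) : ell (ell m j) j = m := by
  simp [ell, Nat.xor_assoc]

/-- Characterization of the butterfly support: `(i,j) ∈ B_m` iff `m = i ⊕ (2^{j'} - 1)`
for some `j' ∈ [k]` with `j' = j`, or `i(j') = i(j'-1)` and `(j' - j) mod k ≤ ⌊k/2⌋`. -/
theorem butterfly_support_characterization
    (k : ℕ) (hk : 3 ≤ k) (hodd : Odd k)
    (i m j : ℕ) (hi : i < 2 ^ (k - 1)) (hm : m < 2 ^ (k - 1)) (hj : j < k) :
    (i, j) ∈ Bline k m ↔
      ∃ j' < k, m = ell i j' ∧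
        (j' = j ∨ (dark i j' ∧ ((j' : ℤ) - (j : ℤ)) % (k : ℤ) ≤ ((k / 2 : ℕ) : ℤ))) := by
  simp only [Bline, Finset.mem_biUnion, Finset.mem_range]
  constructor
  · rintro ⟨j', hj', hmem⟩
    unfold Bset at hmem
    split_ifs at hmem with hd
    · simp only [Finset.mem_image, Finset.mem_filter, Finset.mem_range, Prod.mk.injEq]
        at hmem
      obtain ⟨j₀, ⟨hj₀k, hcond⟩, hie, hje⟩ := hmem
      subst hje
      refine ⟨j', hj', ?_, ?_⟩
      · rw [← hie, ell_ell]
      · exact Or.inr ⟨hie ▸ hd, hcond⟩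
    · simp only [Finset.mem_singleton, Prod.mk.injEq] at hmem
      obtain ⟨hie, hje⟩ := hmem
      exact ⟨j', hj', by rw [hie, ell_ell], Or.inl hje.symm⟩
  · rintro ⟨j', hj', hme, hcase⟩
    refine ⟨j', hj', ?_⟩
    have hie : ell m j' = i := by rw [hme, ell_ell]
    unfold Bset
    rcases hcase with rfl | ⟨hd, hcond⟩
    · split_ifs with hd
      · simp only [Finset.mem_image, Finset.mem_filter, Finset.mem_range, Prod.mk.injEq]
        exact ⟨j', ⟨hj, by simp; positivity⟩, hie, rfl⟩
      · simp [hie]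
    · rw [if_pos (hie ▸ hd)]
      simp only [Finset.mem_image, Finset.mem_filter, Finset.mem_range, Prod.mk.injEq]
      exact ⟨j, ⟨hj, hcond⟩, hie, rfl⟩
end
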